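/- arXiv:2405.13157 — 3 statements merged into one kernel-verified Lean document; each statement's English description precedes it below -/
import Mathlib

section
/- Let c, d, e be small categories. Let F : (e ⥤ Type) ⥤ (c ⥤ Type) be a familial functor with positions F(1) and arities F[I], and let G : (e ⥤ Type) ⥤ (d ⥤ Type) be a familial functor. Define L : (d ⥤ Type) ⥤ (c ⥤ Type) to be the familial functor with the same positions copresheaf F(1) and with arity at a position I given by the d-copresheaf G(F[I]), i.e. L(Y)(C) ≅ Σ_{I ∈ F(1)(C)} Hom_{d ⥤ Type}(G(F[I]), Y). Let u : F ⟶ G ⋙ L be the natural transformation whose component at X sends (I, f : F[I] ⟶ X) to (I, G(f) : G(F[I]) ⟶ G(X)). Then for every familial functor R : (d ⥤ Type) ⥤ (c ⥤ Type), the map sending a natural transformation γ : L ⟶ R to (whiskering of γ with G) ∘ u : F ⟶ G ⋙ R is a bijection Nat(L, R) ≅ Nat(F, G ⋙ R); that is, (L, u) exhibits L as a left Kan extension of F along G within familial functors (the right coclosure ⌈F/G⌉). -/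
/-!
A natural transformation out of a familial functor `F` is determined by its values on the generic
elements `⟨I, 𝟙 F[I]⟩ ∈ F(F[I])(C)`, and by Yoneda these values can be prescribed freely subject
only to compatibility with reindexing of positions. The generic element of `F(F[I])` and that of
`L(G(F[I]))` both lie over the position `I`, and `u` sends the first to the second because `G`
preserves identities. So `γ ↦ u ≫ G ◁ γ` matches transformations `L ⟶ R` and `F ⟶ G ⋙ R`
that are classified by the same compatible family.
-/

namespace Fam
open CategoryTheory Opposite Limits
private lemma sigmaExt {α : Type} {β : α → Type} {a a' : α} {b : β a} {b' : β a'}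
    (h : a = a') (h' : HEq b b') : (⟨a, b⟩ : Σ x, β x) = ⟨a', b'⟩ := by
  subst h; cases h'; rfl
variable {c d : Type} [SmallCategory c] [SmallCategory d]
def elHom (pos : c ⥤ Type) {C C' : c} (f : C ⟶ C') (I : pos.obj C) :
    pos.elementsMk C I ⟶ pos.elementsMk C' (pos.map f I) :=
  CategoryOfElements.homMk _ _ f rfl
lemma eqToHom_val {pos : c ⥤ Type} {x y : pos.Elements} (E : x = y) :
    (eqToHom E).val = eqToHom (congrArg Sigma.fst E) := by
  subst E; simp
@[simps]
def famApply (pos : c ⥤ Type) (ar : pos.Elementsᵒᵖ ⥤ d ⥤ Type) :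
    (d ⥤ Type) ⥤ c ⥤ Type where
  obj X :=
    { obj := fun C => Σ I : pos.obj C, ar.obj (op (pos.elementsMk C I)) ⟶ X
      map := fun {C C'} f => TypeCat.ofHom (fun x => ⟨pos.map f x.1, ar.map (elHom pos f x.1).op ≫ x.2⟩)
      map_id := by
        intro C
        ext x : 3
        obtain ⟨I, g⟩ := x
        have h : pos.map (𝟙 C) I = I := by simp
        have hE : pos.elementsMk C I = pos.elementsMk C (pos.map (𝟙 C) I) := by rw [h]
        have he : elHom pos (𝟙 C) I = eqToHom hE := by
          apply CategoryOfElements.ext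
          rw [eqToHom_val]
          simp [elHom]
        dsimp
        refine sigmaExt h ?_
        rw [he]
        simp [eqToHom_op, eqToHom_map]
      map_comp := by
        intro C C' C'' f g
        ext x : 3
        obtain ⟨I, u⟩ := x
        have h : pos.map (f ≫ g) I = pos.map g (pos.map f I) := by simp
        have hE : pos.elementsMk C'' (pos.map (f ≫ g) I)
            = pos.elementsMk C'' (pos.map g (pos.map f I)) := by rw [h]
        have hcomp : elHom pos f I ≫ elHom pos g (pos.map f I)
            = elHom pos (f ≫ g) I ≫ eqToHom hE := by
          apply CategoryOfElements.ext
          rw [CategoryOfElements.comp_val, CategoryOfElements.comp_val, eqToHom_val]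
          simp [elHom]
        dsimp
        refine sigmaExt h ?_
        rw [← Category.assoc, ← ar.map_comp, ← op_comp, hcomp, op_comp, ar.map_comp,
          Category.assoc]
        simp [eqToHom_op, eqToHom_map] }
  map {X Y} t :=
    { app := fun C => TypeCat.ofHom (fun x => ⟨x.1, x.2 ≫ t⟩)
      naturality := by
        intro C C' f
        ext x : 3
        dsimp
        rw [Category.assoc] }
  map_id := by
    intro X
    apply NatTrans.ext
    ext C x : 4
    dsimp
    rw [Category.comp_id]
  map_comp := by
    intro X Y Z s t
    apply NatTrans.ext
    ext C x : 4
    dsimp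
    rw [Category.assoc]

/-- The unit exhibiting `famApply pos (ar ⋙ G)` as the right coclosure `⌈F/G⌉`,
i.e. the left Kan extension of the familial functor `F = famApply pos ar` along `G`. -/
def coclosureUnit {e : Type} [SmallCategory e] (pos : c ⥤ Type)
    (ar : pos.Elementsᵒᵖ ⥤ e ⥤ Type) (G : (e ⥤ Type) ⥤ d ⥤ Type) :
    famApply pos ar ⟶ G ⋙ famApply pos (ar ⋙ G) where
  app X :=
    { app := fun C => TypeCat.ofHom (fun x => ⟨x.1, G.map x.2⟩)
      naturality := by
        intro C C' f
        ext x : 3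
        show (⟨pos.map f x.1, G.map (ar.map (elHom pos f x.1).op ≫ x.2)⟩ :
            Σ I : pos.obj C', (ar ⋙ G).obj (op (pos.elementsMk C' I)) ⟶ G.obj X)
          = ⟨pos.map f x.1, G.map (ar.map (elHom pos f x.1).op) ≫ G.map x.2⟩
        rw [G.map_comp] }
  naturality := by
    intro X Y t
    apply NatTrans.ext
    ext C x : 4
    show (⟨x.1, G.map (x.2 ≫ t)⟩ :
        Σ I : pos.obj C, (ar ⋙ G).obj (op (pos.elementsMk C I)) ⟶ G.obj Y)
      = ⟨x.1, G.map x.2 ≫ G.map t⟩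
    rw [G.map_comp]

lemma naturality_app_apply {A : Type*} [Category A] {P K : A ⥤ c ⥤ Type} (α : P ⟶ K)
    {X Y : A} (g : X ⟶ Y) (C : c) (x : (P.obj X).obj C) :
    (α.app Y).app C ((P.map g).app C x) = (K.map g).app C ((α.app X).app C x) :=
  ConcreteCategory.congr_hom (NatTrans.naturality_app α C g) x

section GenericValue

variable {pos : c ⥤ Type} {ar : pos.Elementsᵒᵖ ⥤ d ⥤ Type} {K : (d ⥤ Type) ⥤ c ⥤ Type}

def genericValue (α : famApply pos ar ⟶ K) (C : c) (I : pos.obj C) :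
    (K.obj (ar.obj (op (pos.elementsMk C I)))).obj C :=
  (α.app _).app C ⟨I, 𝟙 _⟩

lemma app_app_eq_map_genericValue (α : famApply pos ar ⟶ K) {X : d ⥤ Type} {C : c}
    (I : pos.obj C) (g : ar.obj (op (pos.elementsMk C I)) ⟶ X) :
    (α.app X).app C ⟨I, g⟩ = (K.map g).app C (genericValue α C I) :=
  calc (α.app X).app C ⟨I, g⟩ = (α.app X).app C ⟨I, 𝟙 _ ≫ g⟩ :=
        congrArg (fun g => (α.app X).app C ⟨I, g⟩) (Category.id_comp g).symm
    _ = (K.map g).app C (genericValue α C I) := naturality_app_apply α g C ⟨I, 𝟙 _⟩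

def IsCompatibleFamily
    (τ : ∀ (C : c) (I : pos.obj C), (K.obj (ar.obj (op (pos.elementsMk C I)))).obj C) : Prop :=
  ∀ ⦃C C' : c⦄ (f : C ⟶ C') (I : pos.obj C),
    (K.map (ar.map (elHom pos f I).op)).app C' (τ C' (pos.map f I)) = (K.obj _).map f (τ C I)

lemma isCompatibleFamily_genericValue (α : famApply pos ar ⟶ K) :
    IsCompatibleFamily (genericValue α) := fun _ C' f I =>
  calc _ = (α.app _).app C' ⟨pos.map f I, ar.map (elHom pos f I).op⟩ :=
        (app_app_eq_map_genericValue α _ _).symm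
    _ = (α.app _).app C' ⟨pos.map f I, ar.map (elHom pos f I).op ≫ 𝟙 _⟩ :=
        congrArg (fun g => (α.app _).app C' ⟨pos.map f I, g⟩) (Category.comp_id _).symm
    _ = _ := NatTrans.naturality_apply (α.app _) f ⟨I, 𝟙 _⟩

lemma ext_of_genericValue {α β : famApply pos ar ⟶ K} (h : genericValue α = genericValue β) :
    α = β := by
  ext X C : 4
  refine ConcreteCategory.hom_ext _ _ fun ⟨I, g⟩ => ?_
  calc (α.app X).app C ⟨I, g⟩ = (K.map g).app C (genericValue α C I) :=
        app_app_eq_map_genericValue α I g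
    _ = (K.map g).app C (genericValue β C I) := by rw [h]
    _ = (β.app X).app C ⟨I, g⟩ := (app_app_eq_map_genericValue β I g).symm

def ofCompatibleFamily
    (τ : ∀ (C : c) (I : pos.obj C), (K.obj (ar.obj (op (pos.elementsMk C I)))).obj C)
    (hτ : IsCompatibleFamily τ) : famApply pos ar ⟶ K where
  app Y :=
    { app C := TypeCat.ofHom fun x => (K.map x.2).app C (τ C x.1)
      naturality C C' f := ConcreteCategory.hom_ext _ _ fun ⟨I, g⟩ =>
        show (K.map (ar.map (elHom pos f I).op ≫ g)).app C' (τ C' (pos.map f I))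
            = (K.obj Y).map f ((K.map g).app C (τ C I)) by
          rw [Functor.map_comp, NatTrans.comp_app_apply, hτ f I, NatTrans.naturality_apply] }
  naturality Y Z t := by
    ext C : 2
    exact ConcreteCategory.hom_ext _ _ fun ⟨I, g⟩ =>
      show (K.map (g ≫ t)).app C (τ C I) = (K.map t).app C ((K.map g).app C (τ C I)) by
        rw [Functor.map_comp, NatTrans.comp_app_apply]

lemma genericValue_ofCompatibleFamily
    (τ : ∀ (C : c) (I : pos.obj C), (K.obj (ar.obj (op (pos.elementsMk C I)))).obj C)
    (hτ : IsCompatibleFamily τ) : genericValue (ofCompatibleFamily τ hτ) = τ := by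
  funext C I
  show (K.map (𝟙 _)).app C (τ C I) = τ C I
  simp

end GenericValue

section Coclosure

variable {e : Type} [SmallCategory e] {pos : c ⥤ Type} {ar : pos.Elementsᵒᵖ ⥤ e ⥤ Type}
  {G : (e ⥤ Type) ⥤ d ⥤ Type} {R : (d ⥤ Type) ⥤ c ⥤ Type}

lemma genericValue_coclosureUnit_comp_whiskerLeft (γ : famApply pos (ar ⋙ G) ⟶ R) :
    genericValue (coclosureUnit pos ar G ≫ Functor.whiskerLeft G γ) = genericValue γ :=
  funext fun C => funext fun I => congrArg (fun g => (γ.app _).app C ⟨I, g⟩) (G.map_id _)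

def coclosureTranspose (δ : famApply pos ar ⟶ G ⋙ R) : famApply pos (ar ⋙ G) ⟶ R :=
  ofCompatibleFamily (genericValue (ar := ar) δ) (isCompatibleFamily_genericValue δ)

lemma genericValue_coclosureTranspose (δ : famApply pos ar ⟶ G ⋙ R) :
    genericValue (coclosureTranspose δ) = genericValue δ :=
  genericValue_ofCompatibleFamily _ _

theorem coclosureUnit_comp_whiskerLeft_bijective :
    Function.Bijective fun γ : famApply pos (ar ⋙ G) ⟶ R =>
      coclosureUnit pos ar G ≫ Functor.whiskerLeft G γ := by
  refine ⟨fun γ γ' h => ext_of_genericValue ?_, fun δ =>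
    ⟨coclosureTranspose δ, ext_of_genericValue ?_⟩⟩
  · dsimp only at h
    rw [← genericValue_coclosureUnit_comp_whiskerLeft γ, h,
      genericValue_coclosureUnit_comp_whiskerLeft]
  · rw [genericValue_coclosureUnit_comp_whiskerLeft, genericValue_coclosureTranspose]

end Coclosure

theorem coclosure_is_leftKanExtension_among_familial_general
    {c d e : Type} [SmallCategory c] [SmallCategory d] [SmallCategory e]
    (F : (e ⥤ Type) ⥤ c ⥤ Type) (posF : c ⥤ Type)
    (arF : posF.Elementsᵒᵖ ⥤ e ⥤ Type) (eF : famApply posF arF ≅ F)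
    (G : (e ⥤ Type) ⥤ d ⥤ Type)
    (R : (d ⥤ Type) ⥤ c ⥤ Type) :
    Function.Bijective (fun γ : famApply posF (arF ⋙ G) ⟶ R =>
      ((eF.inv ≫ coclosureUnit posF arF G) ≫ Functor.whiskerLeft G γ : F ⟶ G ⋙ R)) := by
  simp_rw [Category.assoc]
  exact eF.homFromEquiv.bijective.comp coclosureUnit_comp_whiskerLeft_bijective

/-- For familial functors `F : (e ⥤ Type) ⥤ (c ⥤ Type)` (with positions
`posF` and arities `arF`) and `G : (e ⥤ Type) ⥤ (d ⥤ Type)`, the familial functor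
`L := famApply posF (arF ⋙ G)` (same positions as `F`, arity `G (F[I])` at `I`) together with
the unit `u : F ⟶ G ⋙ L`, `(I, f) ↦ (I, G.map f)`, exhibits `L` as the left Kan extension of
`F` along `G` relative to familial functors: for every familial `R`, postcomposition
`γ ↦ u ≫ whiskerLeft G γ` is a bijection `(L ⟶ R) ≃ (F ⟶ G ⋙ R)`. -/
theorem coclosure_is_leftKanExtension_among_familial
    {c d e : Type} [SmallCategory c] [SmallCategory d] [SmallCategory e]
    (F : (e ⥤ Type) ⥤ c ⥤ Type) (posF : c ⥤ Type)
    (arF : posF.Elementsᵒᵖ ⥤ e ⥤ Type) (eF : famApply posF arF ≅ F)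
    (G : (e ⥤ Type) ⥤ d ⥤ Type) (posG : d ⥤ Type)
    (arG : posG.Elementsᵒᵖ ⥤ e ⥤ Type) (eG : famApply posG arG ≅ G)
    (R : (d ⥤ Type) ⥤ c ⥤ Type) (posR : c ⥤ Type)
    (arR : posR.Elementsᵒᵖ ⥤ d ⥤ Type) (eR : famApply posR arR ≅ R) :
    Function.Bijective (fun γ : famApply posF (arF ⋙ G) ⟶ R =>
      ((eF.inv ≫ coclosureUnit posF arF G) ≫ Functor.whiskerLeft G γ : F ⟶ G ⋙ R)) :=
  coclosure_is_leftKanExtension_among_familial_general F posF arF eF G R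

end Fam
end

section
/- Let P denote the free category monad on the category Quiv of quivers, i.e., the monad induced by the adjunction between the free category functor Quiv ⥤ Cat and the forgetful functor Cat ⥤ Quiv. For n ∈ ℕ, let ⟦n⟧ denote the linear quiver with vertex set {0, 1, ..., n} and exactly one arrow i → i+1 for each 0 ≤ i < n. Then the full subcategory of the Kleisli category of P spanned by the linear quivers ⟦n⟧ for all n ∈ ℕ is equivalent to the simplex category Δ (whose objects are the finite nonempty linear orders [n] and whose morphisms are order-preserving maps). -/
namespace FreeCatNerve

open CategoryTheory

/-- The vertex set `{0, 1, ..., n}` of the linear quiver `⟦n⟧`. -/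
def LinOb (n : ℕ) : Type := Fin (n + 1)

/-- The linear quiver structure: exactly one arrow `i → i + 1` for each `0 ≤ i < n`. -/
instance (n : ℕ) : Quiver.{0} (LinOb n) :=
  ⟨fun i j => PLift ((i : Fin (n + 1)).val + 1 = (j : Fin (n + 1)).val)⟩

/-- The linear quiver `⟦n⟧` as an object of the category `Quiv` of quivers. -/
def linQuiv (n : ℕ) : Quiv.{0, 0} := Quiv.of (LinOb n)

/-- The free category monad `P` on `Quiv`, induced by the adjunction between the free
category functor `Quiv ⥤ Cat` and the forgetful functor `Cat ⥤ Quiv`. -/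
def pathMonad : Monad Quiv.{0, 0} := Quiv.adj.toMonad

/-- The full subcategory of the Kleisli category of the free category monad spanned by the
linear quivers `⟦n⟧`, `n ∈ ℕ`. -/
def ThetaPath : Type :=
  InducedCategory (Kleisli pathMonad) (fun n : ℕ => Kleisli.mk pathMonad (linQuiv n))

instance : Category ThetaPath :=
  inferInstanceAs
    (Category (InducedCategory (Kleisli pathMonad) (fun n : ℕ => Kleisli.mk pathMonad (linQuiv n))))

/-!
A Kleisli morphism `⟦m⟧ ⇝ ⟦n⟧` is a prefunctor from `⟦m⟧` to the path quiver of `⟦n⟧`.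
Arrows of `⟦n⟧` raise the vertex by one, so a path `i ⟶ j` exists exactly when `i ≤ j`, and it
is unique because `⟦n⟧` is an arborescence rooted at `0`. Such a prefunctor is therefore the same
thing as a monotone map `Fin (m + 1) → Fin (n + 1)`, its vertex map. Kleisli composition acts on
vertices by composition, so this identification is a fully faithful functor to `Δ`, bijective on
objects.
-/

end FreeCatNerve

namespace Quiver.Arborescence

variable {V : Type*} [Quiver V] [Arborescence V]

instance subsingleton_path (a b : V) : Subsingleton (Path a b) :=
  ⟨fun _ _ => (default : Path (Quiver.root V) a).comp_injective_right (Subsingleton.elim _ _)⟩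

end Quiver.Arborescence

namespace FreeCatNerve

open CategoryTheory Quiver

namespace LinOb

variable {n : ℕ}

abbrev toFin (a : LinOb n) : Fin (n + 1) := a

abbrev ofFin (i : Fin (n + 1)) : LinOb n := i

instance : IsThin (LinOb n) := fun _ _ => inferInstanceAs (Subsingleton (PLift _))

def step (i : Fin n) : ofFin i.castSucc ⟶ ofFin i.succ := ⟨rfl⟩

lemma toFin_lt_of_hom {a b : LinOb n} (e : a ⟶ b) : a.toFin < b.toFin := by
  rw [Fin.lt_def, ← e.down]
  exact Nat.lt_succ_self _

lemma toFin_le_of_path {a b : LinOb n} (p : Path a b) : a.toFin ≤ b.toFin := by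
  induction p with
  | nil => exact le_rfl
  | cons _ e ih => exact ih.trans (toFin_lt_of_hom e).le

noncomputable instance : Arborescence (LinOb n) :=
  arborescenceMk (ofFin 0) (fun a => a.toFin.val) (fun _ _ e => toFin_lt_of_hom e)
    (fun a b _ e f => by
      obtain rfl : a = b := Fin.ext (by have := e.down; have := f.down; omega)
      exact ⟨rfl, heq_of_eq (Subsingleton.elim _ _)⟩)
    (fun b => (Fin.eq_zero_or_eq_succ b).imp id fun ⟨i, hi⟩ => by subst hi; exact ⟨_, ⟨step i⟩⟩)

lemma nonempty_path_of_toFin_le {a b : LinOb n} (h : a.toFin ≤ b.toFin) :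
    Nonempty (Path a b) := by
  induction b using Fin.induction with
  | zero =>
    obtain rfl : a = ofFin 0 := Fin.le_zero_iff.mp h
    exact ⟨Path.nil⟩
  | succ i ih =>
    rcases h.lt_or_eq with h | h
    · exact ⟨(ih (Fin.le_castSucc_iff.mpr h)).some.cons (step i)⟩
    · obtain rfl : a = ofFin i.succ := h
      exact ⟨Path.nil⟩

end LinOb

noncomputable def prefunctorEquivOrderHom (m n : ℕ) :
    (LinOb m ⥤q Paths (LinOb n)) ≃ (Fin (m + 1) →o Fin (n + 1)) where
  toFun F :=
    ⟨F.obj, Fin.monotone_iff_le_succ.mpr fun i => LinOb.toFin_le_of_path (F.map (LinOb.step i))⟩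
  invFun g :=
    { obj := g
      map := fun e =>
        (LinOb.nonempty_path_of_toFin_le (g.monotone (LinOb.toFin_lt_of_hom e).le)).some }
  left_inv _ := Prefunctor.ext (fun _ => rfl) fun _ _ _ =>
    Subsingleton.elim (α := Path (V := LinOb n) _ _) _ _
  right_inv _ := rfl

noncomputable def toSimplexCategory : ThetaPath ⥤ SimplexCategory where
  obj n := .mk n
  map f := SimplexCategory.mkHom (prefunctorEquivOrderHom _ _ f.hom.of)
  map_id _ := rfl
  map_comp _ _ := rfl

noncomputable def fullyFaithfulToSimplexCategory : toSimplexCategory.FullyFaithful where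
  preimage g :=
    InducedCategory.homMk (Kleisli.Hom.mk ((prefunctorEquivOrderHom _ _).symm g.toOrderHom))
  map_preimage _ :=
    SimplexCategory.Hom.ext _ _ ((prefunctorEquivOrderHom _ _).apply_symm_apply _)
  preimage_map _ :=
    InducedCategory.hom_ext (Kleisli.hom_ext ((prefunctorEquivOrderHom _ _).symm_apply_apply _))

instance : toSimplexCategory.IsEquivalence where
  full := fullyFaithfulToSimplexCategory.full
  faithful := fullyFaithfulToSimplexCategory.faithful
  essSurj := ⟨fun X => ⟨X.len, ⟨eqToIso X.mk_len⟩⟩⟩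

/-- The full subcategory of the Kleisli category of the free category
monad on `Quiv` spanned by the linear quivers `⟦n⟧` is equivalent to the simplex category
`Δ`. -/
theorem thetaPath_equiv_simplexCategory : Nonempty (ThetaPath ≌ SimplexCategory) :=
  ⟨toSimplexCategory.asEquivalence⟩

end FreeCatNerve
end

section
/- Let E be a real vector space and let s ⊆ E be a convex set. For positive reals x, x' and points c, c' ∈ s, the point (x/(x+x')) • c + (x'/(x+x')) • c' lies in s, and the binary operation on {x : ℝ // 0 < x} × s defined by (x, c) * (x', c') = (x + x', (x/(x+x')) • c + (x'/(x+x')) • c') is associative. Consequently, adjoining an external unit element e (i.e., taking the type Option ({x : ℝ // 0 < x} × s)) with e as two-sided identity yields a monoid structure, the cone monoid C^cone of the convex set s. -/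
namespace ConeMonoid

/-- The positive reals. -/
abbrev PosReal : Type := { x : ℝ // 0 < x }

variable {E : Type*} [AddCommGroup E] [Module ℝ E]

/-- The normalized weighted combination of two points, with positive weights `x, x'`:
`(x/(x+x')) • c + (x'/(x+x')) • c'`. -/
noncomputable def avg (x x' : PosReal) (c c' : E) : E :=
  (x.1 / (x.1 + x'.1)) • c + (x'.1 / (x.1 + x'.1)) • c'

/-- The normalized weighted combination of two points of a convex set stays in the set. -/
theorem avg_mem {s : Set E} (hs : Convex ℝ s) (x x' : PosReal) {c c' : E}
    (hc : c ∈ s) (hc' : c' ∈ s) : avg x x' c c' ∈ s := by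
  have hpos : (0 : ℝ) < x.1 + x'.1 := add_pos x.2 x'.2
  have hsum : x.1 / (x.1 + x'.1) + x'.1 / (x.1 + x'.1) = 1 := by
    rw [← add_div, div_self hpos.ne']
  exact hs hc hc' (div_nonneg x.2.le hpos.le) (div_nonneg x'.2.le hpos.le) hsum

/-- The binary operation on `{x : ℝ // 0 < x} × s`:
`(x, c) * (x', c') = (x + x', (x/(x+x')) • c + (x'/(x+x')) • c')`. -/
noncomputable def coneMul {s : Set E} (hs : Convex ℝ s) :
    (PosReal × s) → (PosReal × s) → (PosReal × s) :=
  fun p q =>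
    (⟨p.1.1 + q.1.1, add_pos p.1.2 q.1.2⟩,
      ⟨avg p.1 q.1 p.2.1 q.2.1, avg_mem hs p.1 q.1 p.2.2 q.2.2⟩)

/- Both bracketings of a triple product carry the weight `x + y + z` and the point
`(x + y + z)⁻¹ • (x • a + y • b + z • c)`, because
`(x + x') • avg x x' c c' = x • c + x' • c'`.
Adjoining a unit to the resulting semigroup is Mathlib's `WithOne`. -/

theorem add_smul_avg (x x' : PosReal) (c c' : E) :
    (x.1 + x'.1) • avg x x' c c' = x.1 • c + x'.1 • c' := by
  have hpos : x.1 + x'.1 ≠ 0 := (add_pos x.2 x'.2).ne'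
  simp only [avg, smul_add, smul_smul, mul_div_cancel₀ _ hpos]

theorem avg_eq_inv_smul (x x' : PosReal) (c c' : E) :
    avg x x' c c' = (x.1 + x'.1)⁻¹ • (x.1 • c + x'.1 • c') := by
  rw [← add_smul_avg, inv_smul_smul₀ (add_pos x.2 x'.2).ne']

theorem avg_assoc (x y z : PosReal) (a b c : E) :
    avg ⟨x.1 + y.1, add_pos x.2 y.2⟩ z (avg x y a b) c
      = avg x ⟨y.1 + z.1, add_pos y.2 z.2⟩ a (avg y z b c) := by
  rw [avg_eq_inv_smul ⟨_, _⟩ z (avg x y a b), avg_eq_inv_smul x ⟨_, _⟩ a (avg y z b c)]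
  dsimp only
  rw [add_smul_avg, add_smul_avg, add_assoc x.1, add_assoc (x.1 • a)]

theorem coneMul_assoc {s : Set E} (hs : Convex ℝ s) (a b c : PosReal × s) :
    coneMul hs (coneMul hs a b) c = coneMul hs a (coneMul hs b c) :=
  Prod.ext (Subtype.ext (add_assoc _ _ _)) (Subtype.ext (avg_assoc _ _ _ _ _ _))

theorem WithOne.exists_option_mul {α : Type*} [Semigroup α] :
    ∃ mul : Option α → Option α → Option α,
      (∀ a, mul none a = a) ∧
      (∀ a, mul a none = a) ∧
      (∀ a b c, mul (mul a b) c = mul a (mul b c)) ∧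
      (∀ a b : α, mul (some a) (some b) = some (a * b)) :=
  ⟨(HMul.hMul : WithOne α → WithOne α → WithOne α), one_mul (M := WithOne α),
    mul_one (M := WithOne α), mul_assoc (G := WithOne α), fun _ _ => rfl⟩

noncomputable abbrev coneSemigroup {s : Set E} (hs : Convex ℝ s) : Semigroup (PosReal × s) where
  mul := coneMul hs
  mul_assoc := coneMul_assoc hs

/-- For a convex set `s` in a real vector space: the normalized weighted
combination of two points of `s` with positive weights lies in `s`; the induced binary
operation on `{x : ℝ // 0 < x} × s` is associative; and adjoining an external unit element
(the extra element `none` of `Option`) yields a monoid — the cone monoid `C^cone` of `s`. -/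
theorem cone_monoid {s : Set E} (hs : Convex ℝ s) :
    (∀ (x x' : PosReal) (c c' : E), c ∈ s → c' ∈ s → avg x x' c c' ∈ s) ∧
    (∀ a b c : PosReal × s,
      coneMul hs (coneMul hs a b) c = coneMul hs a (coneMul hs b c)) ∧
    ∃ mul : Option (PosReal × s) → Option (PosReal × s) → Option (PosReal × s),
      (∀ a, mul none a = a) ∧
      (∀ a, mul a none = a) ∧
      (∀ a b c, mul (mul a b) c = mul a (mul b c)) ∧
      (∀ a b : PosReal × s, mul (some a) (some b) = some (coneMul hs a b)) := by
  let := coneSemigroup hs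
  exact ⟨fun x x' _ _ hc hc' => avg_mem hs x x' hc hc', coneMul_assoc hs,
    WithOne.exists_option_mul⟩

end ConeMonoid
end
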